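/- arXiv:2507.03426 — 2 statements merged into one kernel-verified Lean document; each statement's English description precedes it below -/
import Mathlib

section
/- Let V be a Hausdorff locally convex topological vector space over ℝ with continuous dual V', and let ρ : V → [0,∞] be convex with ρ(0) = 0. Then: (a) if ρ satisfies the Δ₂-condition, its convex conjugate ρ* satisfies the ∇₂-condition; (b) if ρ satisfies the ∇₂-condition, then ρ* satisfies the Δ₂-condition; (c) if in addition ρ is lower semicontinuous, then ρ satisfies the Δ₂-condition if and only if ρ* satisfies the ∇₂-condition, and ρ satisfies the ∇₂-condition if and only if ρ* satisfies the Δ₂-condition. -/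
open scoped ENNReal NNReal

noncomputable section

/-- A `[0,∞]`-valued functional on a real vector space is convex. -/
def ConvexENNReal {W : Type*} [AddCommGroup W] [Module ℝ W] (ρ : W → ℝ≥0∞) : Prop :=
  ∀ (x y : W) (a b : ℝ), 0 ≤ a → 0 ≤ b → a + b = 1 →
    ρ (a • x + b • y) ≤ ENNReal.ofReal a * ρ x + ENNReal.ofReal b * ρ y

/-- The modular cone `M(ρ) = {λ • x : λ ≥ 0, ρ x < ∞}`. -/
def modularCone {W : Type*} [AddCommGroup W] [Module ℝ W] (ρ : W → ℝ≥0∞) : Set W :=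
  {x | ∃ (lam : ℝ) (y : W), 0 ≤ lam ∧ ρ y ≠ ⊤ ∧ x = lam • y}

/-- The Luxemburg functional `‖x‖_L = inf {λ > 0 : ρ (λ⁻¹ x) ≤ 1}` (equal to `∞` outside
the modular cone, where no admissible `λ` exists). -/
noncomputable def luxemburg {W : Type*} [AddCommGroup W] [Module ℝ W]
    (ρ : W → ℝ≥0∞) (x : W) : ℝ≥0∞ :=
  ⨅ (lam : ℝ) (_ : 0 < lam) (_ : ρ (lam⁻¹ • x) ≤ 1), ENNReal.ofReal lam

variable {V : Type*} [AddCommGroup V] [Module ℝ V] [TopologicalSpace V]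
  [IsTopologicalAddGroup V] [ContinuousSMul ℝ V] [T2Space V] [LocallyConvexSpace ℝ V]

/-- The convex conjugate `ρ*(φ) = sup_x (φ x − ρ x)` on the continuous dual. -/
noncomputable def conjFn (ρ : V → ℝ≥0∞) (φ : V →L[ℝ] ℝ) : ℝ≥0∞ :=
  ⨆ x : V, ENNReal.ofReal (φ x) - ρ x

/-- The Orlicz functional `‖x‖_O = sup {φ x : φ ∈ V', ρ*(φ) ≤ 1}`. -/
noncomputable def orlicz (ρ : V → ℝ≥0∞) (x : V) : ℝ≥0∞ :=
  ⨆ (φ : V →L[ℝ] ℝ) (_ : conjFn ρ φ ≤ 1), ENNReal.ofReal (φ x)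

/-- The `Δ₂`-condition: there is `C ≥ 0` with `ρ (2 x) ≤ C • ρ x` for all `x ∈ D(ρ)`. -/
def Delta2 {W : Type*} [AddCommGroup W] [Module ℝ W] (ρ : W → ℝ≥0∞) : Prop :=
  ∃ C : ℝ≥0, ∀ x : W, ρ x ≠ ⊤ → ρ ((2 : ℝ) • x) ≤ (C : ℝ≥0∞) * ρ x

/-- The `∇₂`-condition: there is `K > 2` with `K • ρ x ≤ ρ (2 x)` for all `x ∈ D(ρ)`. -/
def Nabla2 {W : Type*} [AddCommGroup W] [Module ℝ W] (ρ : W → ℝ≥0∞) : Prop :=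
  ∃ K : ℝ≥0, 2 < K ∧ ∀ x : W, ρ x ≠ ⊤ → (K : ℝ≥0∞) * ρ x ≤ ρ ((2 : ℝ) • x)

section Core

variable {W B : Type*} [AddCommGroup W] [Module ℝ W] [AddCommGroup B] [Module ℝ B]

lemma rho_smul_le {ρ : W → ℝ≥0∞} (hconv : ConvexENNReal ρ) (h0 : ρ 0 = 0)
    {c : ℝ} (hc0 : 0 ≤ c) (hc1 : c ≤ 1) (x : W) : ρ (c • x) ≤ ρ x := by
  have h := hconv x 0 c (1 - c) hc0 (by linarith) (by ring)
  simp only [smul_zero, add_zero, h0, mul_zero] at h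
  refine h.trans ?_
  calc ENNReal.ofReal c * ρ x ≤ 1 * ρ x :=
        mul_le_mul_left (ENNReal.ofReal_le_one.2 hc1) _
    _ = ρ x := one_mul _

lemma nabla2_iter {ρ : W → ℝ≥0∞} (hconv : ConvexENNReal ρ) (h0 : ρ 0 = 0) {K : ℝ≥0}
    (hK : ∀ x, ρ x ≠ ⊤ → (K : ℝ≥0∞) * ρ x ≤ ρ ((2 : ℝ) • x)) :
    ∀ (m : ℕ) (x : W), ρ x ≠ ⊤ → (K : ℝ≥0∞) ^ m * ρ (((2 : ℝ)⁻¹) ^ m • x) ≤ ρ x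
  | 0, x, _ => by simp
  | (m + 1), x, hx => by
    set y := ((2 : ℝ)⁻¹) ^ (m + 1) • x with hy
    have h2y : (2 : ℝ) • y = ((2 : ℝ)⁻¹) ^ m • x := by
      rw [hy, smul_smul]; congr 1; rw [pow_succ]; ring
    have hρy : ρ y ≠ ⊤ :=
      ne_top_of_le_ne_top hx
        (rho_smul_le hconv h0 (by positivity) (pow_le_one₀ (by norm_num) (by norm_num)) x)
    calc (K : ℝ≥0∞) ^ (m + 1) * ρ y = (K : ℝ≥0∞) ^ m * ((K : ℝ≥0∞) * ρ y) := by
          rw [pow_succ]; ring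
      _ ≤ (K : ℝ≥0∞) ^ m * ρ ((2 : ℝ) • y) := mul_le_mul_right (hK y hρy) _
      _ = (K : ℝ≥0∞) ^ m * ρ (((2 : ℝ)⁻¹) ^ m • x) := by rw [h2y]
      _ ≤ ρ x := nabla2_iter hconv h0 hK m x hx

lemma core_delta_to_nabla {ρ : W → ℝ≥0∞} (hconv : ConvexENNReal ρ)
    (e : B → W → ℝ) (h1 : ∀ (b : B) (c : ℝ) (w : W), e b (c • w) = c * e b w)
    (h2 : ∀ (b : B) (w : W), e ((2 : ℝ) • b) w = 2 * e b w)
    (hΔ : Delta2 ρ) :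
    Nabla2 (fun b => ⨆ w, ENNReal.ofReal (e b w) - ρ w) := by
  obtain ⟨C₀, hC₀⟩ := hΔ
  set C : ℝ≥0 := C₀ + 1 with hCdef
  have hC : ∀ w : W, ρ w ≠ ⊤ → ρ ((2 : ℝ) • w) ≤ (C : ℝ≥0∞) * ρ w := by
    intro w hw
    refine (hC₀ w hw).trans (mul_le_mul_left ?_ _)
    exact_mod_cast le_self_add
  have hCpos : (0 : ℝ≥0) < C := by positivity
  have hC1 : (1 : ℝ) ≤ (C : ℝ) := by
    rw [hCdef]; push_cast; linarith [NNReal.coe_nonneg C₀]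
  set lam : ℝ := 1 + (C : ℝ)⁻¹ with hlam
  have hCinv0 : (0 : ℝ) < (C : ℝ)⁻¹ := by positivity
  have hCinv1 : (C : ℝ)⁻¹ ≤ 1 := by
    rw [inv_le_one_iff₀]; right; exact hC1
  refine ⟨2 + 2 * C⁻¹, ?_, ?_⟩
  · have : (0 : ℝ≥0) < 2 * C⁻¹ := by
      apply mul_pos (by norm_num)
      rwa [inv_pos]
    exact lt_add_of_pos_right 2 this
  intro b _
  set K : ℝ≥0 := 2 + 2 * C⁻¹ with hKdef
  have hKreal : (K : ℝ) = 2 * lam := by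
    rw [hKdef, hlam]; push_cast; ring
  rw [ENNReal.mul_iSup]
  refine iSup_le fun w => ?_
  by_cases hw : ρ w = ⊤
  · simp [hw, ENNReal.sub_top]
  -- subtrahend bound : ρ (lam • w) ≤ K * ρ w
  have ha : (0 : ℝ) ≤ lam - 1 := by rw [hlam]; linarith
  have hb : (0 : ℝ) ≤ 2 - lam := by rw [hlam]; linarith
  have hcomb := hconv ((2 : ℝ) • w) w (lam - 1) (2 - lam) ha hb (by ring)
  rw [smul_smul, ← add_smul] at hcomb
  have hsc : (lam - 1) * 2 + (2 - lam) = lam := by ring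
  rw [hsc] at hcomb
  have hsub : ρ (lam • w) ≤ (K : ℝ≥0∞) * ρ w := by
    refine hcomb.trans ?_
    have e1 : ENNReal.ofReal (lam - 1) * ρ ((2 : ℝ) • w) ≤ 1 * ρ w := by
      calc ENNReal.ofReal (lam - 1) * ρ ((2 : ℝ) • w)
          ≤ ENNReal.ofReal (lam - 1) * ((C : ℝ≥0∞) * ρ w) :=
            mul_le_mul_right (hC w hw) _
        _ = (ENNReal.ofReal (lam - 1) * (C : ℝ≥0∞)) * ρ w := by ring
        _ = 1 * ρ w := by
            congr 1
            have : lam - 1 = ((C⁻¹ : ℝ≥0) : ℝ) := by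
              rw [hlam, NNReal.coe_inv]; ring
            rw [this, ENNReal.ofReal_coe_nnreal, ← ENNReal.coe_mul,
              inv_mul_cancel₀ hCpos.ne', ENNReal.coe_one]
    have e2 : ENNReal.ofReal (2 - lam) * ρ w ≤ 1 * ρ w :=
      mul_le_mul_left (ENNReal.ofReal_le_one.2 (by linarith)) _
    calc ENNReal.ofReal (lam - 1) * ρ ((2 : ℝ) • w) + ENNReal.ofReal (2 - lam) * ρ w
        ≤ 1 * ρ w + 1 * ρ w := add_le_add e1 e2
      _ = (2 : ℝ≥0∞) * ρ w := by ring
      _ ≤ (K : ℝ≥0∞) * ρ w := by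
          refine mul_le_mul_left ?_ _
          have : (2 : ℝ≥0) ≤ K := by
            rw [hKdef]; exact le_self_add
          exact_mod_cast this
  calc (K : ℝ≥0∞) * (ENNReal.ofReal (e b w) - ρ w)
      = (K : ℝ≥0∞) * ENNReal.ofReal (e b w) - (K : ℝ≥0∞) * ρ w :=
        ENNReal.mul_sub (fun _ _ => ENNReal.coe_ne_top)
    _ = ENNReal.ofReal ((K : ℝ) * e b w) - (K : ℝ≥0∞) * ρ w := by
        rw [ENNReal.ofReal_mul (by positivity), ENNReal.ofReal_coe_nnreal]
    _ ≤ ENNReal.ofReal ((K : ℝ) * e b w) - ρ (lam • w) := tsub_le_tsub_left hsub _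
    _ = ENNReal.ofReal (e ((2 : ℝ) • b) (lam • w)) - ρ (lam • w) := by
        rw [h1, h2, hKreal]; ring_nf
    _ ≤ ⨆ w, ENNReal.ofReal (e ((2 : ℝ) • b) w) - ρ w :=
        le_iSup (fun w => ENNReal.ofReal (e ((2 : ℝ) • b) w) - ρ w) (lam • w)

lemma core_nabla_to_delta {ρ : W → ℝ≥0∞} (hconv : ConvexENNReal ρ) (h0 : ρ 0 = 0)
    (e : B → W → ℝ) (h1 : ∀ (b : B) (c : ℝ) (w : W), e b (c • w) = c * e b w)
    (h2 : ∀ (b : B) (w : W), e ((2 : ℝ) • b) w = 2 * e b w)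
    (hN : Nabla2 ρ) :
    Delta2 (fun b => ⨆ w, ENNReal.ofReal (e b w) - ρ w) := by
  obtain ⟨K, hK2, hK⟩ := hN
  have hKd : (1 : ℝ≥0) < K / 2 := by
    rw [one_lt_div (by norm_num : (0 : ℝ≥0) < 2)]; exact hK2
  obtain ⟨n, hn⟩ := pow_unbounded_of_one_lt (2 : ℝ≥0) hKd
  have hn' : (2 : ℝ≥0) * 2 ^ n ≤ K ^ n := by
    rw [div_pow, lt_div_iff₀ (by positivity : (0:ℝ≥0) < 2 ^ n)] at hn
    exact hn.le
  refine ⟨2 ^ (n + 1), fun b _ => ?_⟩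
  refine iSup_le fun w => ?_
  by_cases hw : ρ w = ⊤
  · simp [hw]
  set y : W := ((2 : ℝ)⁻¹) ^ n • w with hy
  have hwy : ((2 : ℝ)) ^ n • y = w := by
    rw [hy, smul_smul, ← mul_pow, mul_inv_cancel₀ two_ne_zero, one_pow, one_smul]
  have hiter : (K : ℝ≥0∞) ^ n * ρ y ≤ ρ w := nabla2_iter hconv h0 hK n w hw
  have hρy : ρ y ≠ ⊤ :=
    ne_top_of_le_ne_top hw
      (rho_smul_le hconv h0 (by positivity) (pow_le_one₀ (by norm_num) (by norm_num)) w)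
  have hE : e ((2 : ℝ) • b) w = 2 ^ (n + 1) * e b y := by
    rw [h2, ← hwy, h1, pow_succ]; ring
  have hsub : ((2 : ℝ≥0∞) ^ (n + 1)) * ρ y ≤ ρ w := by
    refine le_trans ?_ hiter
    refine mul_le_mul_left ?_ _
    calc (2 : ℝ≥0∞) ^ (n + 1) = (2 : ℝ≥0∞) * 2 ^ n := by rw [pow_succ]; ring
      _ ≤ (K : ℝ≥0∞) ^ n := by exact_mod_cast hn'
  have hcoe : ((2 ^ (n + 1) : ℝ≥0) : ℝ≥0∞) = (2 : ℝ≥0∞) ^ (n + 1) := by push_cast; ring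
  rw [hcoe]
  calc ENNReal.ofReal (e ((2 : ℝ) • b) w) - ρ w
      ≤ ENNReal.ofReal ((2 : ℝ) ^ (n + 1) * e b y) - (2 : ℝ≥0∞) ^ (n + 1) * ρ y := by
        rw [hE]; exact tsub_le_tsub_left hsub _
    _ = (2 : ℝ≥0∞) ^ (n + 1) * ENNReal.ofReal (e b y) - (2 : ℝ≥0∞) ^ (n + 1) * ρ y := by
        rw [ENNReal.ofReal_mul (by positivity), ENNReal.ofReal_pow (by norm_num),
          ENNReal.ofReal_ofNat]
    _ = (2 : ℝ≥0∞) ^ (n + 1) * (ENNReal.ofReal (e b y) - ρ y) :=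
        (ENNReal.mul_sub (fun _ _ => ENNReal.pow_ne_top ENNReal.ofNat_ne_top)).symm
    _ ≤ (2 : ℝ≥0∞) ^ (n + 1) * ⨆ w, ENNReal.ofReal (e b w) - ρ w :=
        mul_le_mul_right (le_iSup (fun w => ENNReal.ofReal (e b w) - ρ w) y) _

end Core

lemma conjFn_zero (ρ : V → ℝ≥0∞) : conjFn ρ 0 = 0 := by
  simp [conjFn, zero_tsub]

lemma conjFn_convex (ρ : V → ℝ≥0∞) : ConvexENNReal (conjFn ρ) := by
  intro φ ψ a b ha hb hab
  refine iSup_le fun x => ?_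
  rw [tsub_le_iff_right]
  have hx : (a • φ + b • ψ) x = a * φ x + b * ψ x := by
    simp [ContinuousLinearMap.add_apply, ContinuousLinearMap.smul_apply, smul_eq_mul]
  have h1 : ENNReal.ofReal (φ x) ≤ conjFn ρ φ + ρ x := by
    rw [← tsub_le_iff_right]
    exact le_iSup (fun y => ENNReal.ofReal (φ y) - ρ y) x
  have h2 : ENNReal.ofReal (ψ x) ≤ conjFn ρ ψ + ρ x := by
    rw [← tsub_le_iff_right]
    exact le_iSup (fun y => ENNReal.ofReal (ψ y) - ρ y) x
  calc ENNReal.ofReal ((a • φ + b • ψ) x)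
      ≤ ENNReal.ofReal (a * φ x) + ENNReal.ofReal (b * ψ x) := by
        rw [hx]; exact ENNReal.ofReal_add_le
    _ = ENNReal.ofReal a * ENNReal.ofReal (φ x) + ENNReal.ofReal b * ENNReal.ofReal (ψ x) := by
        rw [ENNReal.ofReal_mul ha, ENNReal.ofReal_mul hb]
    _ ≤ ENNReal.ofReal a * (conjFn ρ φ + ρ x) + ENNReal.ofReal b * (conjFn ρ ψ + ρ x) :=
        add_le_add (mul_le_mul_right h1 _) (mul_le_mul_right h2 _)
    _ = (ENNReal.ofReal a * conjFn ρ φ + ENNReal.ofReal b * conjFn ρ ψ) +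
          (ENNReal.ofReal a + ENNReal.ofReal b) * ρ x := by ring
    _ = ENNReal.ofReal a * conjFn ρ φ + ENNReal.ofReal b * conjFn ρ ψ + ρ x := by
        rw [← ENNReal.ofReal_add ha hb, hab, ENNReal.ofReal_one, one_mul]

set_option maxHeartbeats 1000000 in
lemma biconj (ρ : V → ℝ≥0∞) (hconv : ConvexENNReal ρ) (h0 : ρ 0 = 0)
    (hlsc : LowerSemicontinuous ρ) (x₀ : V) :
    ρ x₀ = ⨆ φ : V →L[ℝ] ℝ, ENNReal.ofReal (φ x₀) - conjFn ρ φ := by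
  refine le_antisymm ?_ (iSup_le fun φ => ?_)
  swap
  · have h := le_iSup (fun y => ENNReal.ofReal (φ y) - ρ y) x₀
    calc ENNReal.ofReal (φ x₀) - conjFn ρ φ
        ≤ ENNReal.ofReal (φ x₀) - (ENNReal.ofReal (φ x₀) - ρ x₀) := tsub_le_tsub_left h _
      _ ≤ ρ x₀ := tsub_tsub_le
  by_contra hcon
  rw [not_le] at hcon
  set S := ⨆ φ : V →L[ℝ] ℝ, ENNReal.ofReal (φ x₀) - conjFn ρ φ with hS
  obtain ⟨c, hSc, hcρ⟩ := exists_between hcon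
  have hc_ne : c ≠ ⊤ := hcρ.ne_top
  set r := c.toReal with hr
  have hr0 : (0 : ℝ) ≤ r := ENNReal.toReal_nonneg
  have hrc : ENNReal.ofReal r = c := ENNReal.ofReal_toReal hc_ne
  set E : Set (V × ℝ) := {p | 0 ≤ p.2 ∧ ρ p.1 ≤ ENNReal.ofReal p.2} with hE
  have hEconv : Convex ℝ E := by
    rintro ⟨x, t⟩ ⟨hx0, hx⟩ ⟨y, s⟩ ⟨hy0, hy⟩ a b ha hb hab
    constructor
    · exact add_nonneg (mul_nonneg ha hx0) (mul_nonneg hb hy0)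
    · show ρ (a • x + b • y) ≤ ENNReal.ofReal (a * t + b * s)
      calc ρ (a • x + b • y) ≤ ENNReal.ofReal a * ρ x + ENNReal.ofReal b * ρ y :=
            hconv x y a b ha hb hab
        _ ≤ ENNReal.ofReal a * ENNReal.ofReal t + ENNReal.ofReal b * ENNReal.ofReal s :=
            add_le_add (mul_le_mul_right hx _) (mul_le_mul_right hy _)
        _ = ENNReal.ofReal (a * t + b * s) := by
            rw [← ENNReal.ofReal_mul ha, ← ENNReal.ofReal_mul hb,
              ← ENNReal.ofReal_add (mul_nonneg ha hx0) (mul_nonneg hb hy0)]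
  have hEclosed : IsClosed E := by
    have hcl1 : IsClosed {p : V × ℝ | 0 ≤ p.2} := isClosed_le continuous_const continuous_snd
    have hcl2 : IsClosed {p : V × ℝ | ρ p.1 ≤ ENNReal.ofReal p.2} := by
      rw [← isOpen_compl_iff, isOpen_iff_mem_nhds]
      rintro ⟨x, t⟩ hp
      have hp' : ENNReal.ofReal t < ρ x := not_le.1 hp
      obtain ⟨m, hm1, hm2⟩ := exists_between hp'
      have hU1 : IsOpen {z : V | m < ρ z} := hlsc.isOpen_preimage m
      have hU2 : IsOpen {u : ℝ | ENNReal.ofReal u < m} :=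
        isOpen_Iio.preimage ENNReal.continuous_ofReal
      refine Filter.mem_of_superset ((hU1.prod hU2).mem_nhds ⟨hm2, hm1⟩) ?_
      rintro ⟨z, u⟩ ⟨hz, hu⟩
      simp only [Set.mem_compl_iff, Set.mem_setOf_eq, not_le]
      exact lt_trans hu hz
    exact hcl1.inter hcl2
  have hx₀E : (x₀, r) ∉ E := by
    rintro ⟨-, habs⟩
    rw [hrc] at habs
    exact absurd habs (not_le.2 hcρ)
  obtain ⟨f, u, hfu, hfE⟩ := geometric_hahn_banach_point_closed hEconv hEclosed hx₀E
  set φ : V →L[ℝ] ℝ := f.comp (ContinuousLinearMap.inl ℝ V ℝ) with hφ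
  set c₁ : ℝ := f (0, 1) with hc₁def
  have hsplit : ∀ (z : V) (t : ℝ), f (z, t) = φ z + t * c₁ := by
    intro z t
    have hzt : (z, t) = ((z : V), (0 : ℝ)) + t • ((0 : V), (1 : ℝ)) := by
      ext <;> simp
    rw [hzt, map_add, map_smul, smul_eq_mul]
    rfl
  have hφ0 : φ (0 : V) = 0 := map_zero φ
  clear_value φ c₁
  have hu0 : u < 0 := by
    have h00 : ((0 : V), (0 : ℝ)) ∈ E := ⟨le_refl 0, by simp [h0]⟩
    have := hfE _ h00
    rw [hsplit, hφ0] at this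
    linarith
  have hkey : ∀ z : V, ρ z ≠ ⊤ → u < φ z + (ρ z).toReal * c₁ := by
    intro z hz
    have hmem : ((z : V), (ρ z).toReal) ∈ E :=
      ⟨ENNReal.toReal_nonneg, by rw [ENNReal.ofReal_toReal hz]⟩
    have := hfE _ hmem
    rwa [hsplit] at this
  have hc₁0 : 0 ≤ c₁ := by
    by_contra hneg
    push_neg at hneg
    have ht : (0 : ℝ) ≤ (u - 1) / c₁ := by rw [div_nonneg_iff]; right; exact ⟨by linarith, hneg.le⟩
    have hmem : ((0 : V), (u - 1) / c₁) ∈ E := ⟨ht, by simp [h0]⟩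
    have := hfE _ hmem
    rw [hsplit, hφ0, zero_add, div_mul_cancel₀ _ hneg.ne] at this
    linarith
  have hSc' : c ≤ S → False := fun h => absurd h (not_le.2 hSc)
  rcases eq_or_lt_of_le hc₁0 with hc₁ | hc₁
  · -- c₁ = 0
    have hφz : ∀ z : V, ρ z ≠ ⊤ → u < φ z := by
      intro z hz
      have := hkey z hz
      rwa [← hc₁, mul_zero, add_zero] at this
    have hφx₀ : φ x₀ < u := by
      have := hfu
      rw [hsplit, ← hc₁, mul_zero, add_zero] at this
      exact this
    have hpos : (0 : ℝ) < u - φ x₀ := by linarith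
    obtain ⟨n, hn⟩ := exists_nat_ge (r / (u - φ x₀))
    have hnr : r ≤ (n : ℝ) * (u - φ x₀) := by
      rw [div_le_iff₀ hpos] at hn
      linarith
    set ψ : V →L[ℝ] ℝ := (-(n : ℝ)) • φ with hψdef
    have hψval : ∀ z, ψ z = -(n : ℝ) * φ z := fun z => rfl
    clear_value ψ
    have hconj : conjFn ρ ψ ≤ ENNReal.ofReal ((n : ℝ) * (-u)) := by
      refine iSup_le fun z => ?_
      by_cases hz : ρ z = ⊤
      · simp [hz, ENNReal.sub_top]
      · refine tsub_le_self.trans ?_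
        apply ENNReal.ofReal_le_ofReal
        have huz := hφz z hz
        rw [hψval]
        nlinarith [Nat.cast_nonneg (α := ℝ) n]
    apply hSc'
    calc c = ENNReal.ofReal r := hrc.symm
      _ ≤ ENNReal.ofReal ((n : ℝ) * (u - φ x₀)) := ENNReal.ofReal_le_ofReal hnr
      _ = ENNReal.ofReal (ψ x₀ - (n : ℝ) * (-u)) := by rw [hψval]; ring_nf
      _ = ENNReal.ofReal (ψ x₀) - ENNReal.ofReal ((n : ℝ) * (-u)) :=
          ENNReal.ofReal_sub _ (by nlinarith [Nat.cast_nonneg (α := ℝ) n])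
      _ ≤ ENNReal.ofReal (ψ x₀) - conjFn ρ ψ := tsub_le_tsub_left hconj _
      _ ≤ S := le_iSup (fun χ : V →L[ℝ] ℝ => ENNReal.ofReal (χ x₀) - conjFn ρ χ) ψ
  · -- c₁ > 0
    set ψ : V →L[ℝ] ℝ := (-(c₁⁻¹)) • φ with hψdef
    have hψval : ∀ z, ψ z = -φ z / c₁ := by
      intro z
      show -(c₁⁻¹) * φ z = -φ z / c₁
      field_simp
    clear_value ψ
    have hconj : conjFn ρ ψ ≤ ENNReal.ofReal (-u / c₁) := by
      refine iSup_le fun z => ?_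
      by_cases hz : ρ z = ⊤
      · simp [hz, ENNReal.sub_top]
      · have hk := hkey z hz
        set t : ℝ := (ρ z).toReal with htdef
        have ht0 : (0 : ℝ) ≤ t := ENNReal.toReal_nonneg
        have hzt : ψ z - t ≤ -u / c₁ := by
          rw [hψval]
          have h2 : -φ z - t * c₁ ≤ -u := by nlinarith
          calc -φ z / c₁ - t = (-φ z - t * c₁) / c₁ := by field_simp
            _ ≤ -u / c₁ := by gcongr
        calc ENNReal.ofReal (ψ z) - ρ z = ENNReal.ofReal (ψ z) - ENNReal.ofReal t := by
              rw [htdef, ENNReal.ofReal_toReal hz]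
          _ = ENNReal.ofReal (ψ z - t) := (ENNReal.ofReal_sub _ ht0).symm
          _ ≤ ENNReal.ofReal (-u / c₁) := ENNReal.ofReal_le_ofReal hzt
    have hψx₀ : r - u / c₁ ≤ ψ x₀ := by
      have h1 := hfu
      rw [hsplit] at h1
      rw [hψval]
      have h2 : r * c₁ - u ≤ -φ x₀ := by nlinarith
      calc r - u / c₁ = (r * c₁ - u) / c₁ := by field_simp
        _ ≤ -φ x₀ / c₁ := by gcongr
    apply hSc'
    calc c = ENNReal.ofReal r := hrc.symm
      _ ≤ ENNReal.ofReal (ψ x₀ - (-u / c₁)) := by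
          apply ENNReal.ofReal_le_ofReal
          have : r - u / c₁ ≤ ψ x₀ := hψx₀
          have hh : ψ x₀ - (-u / c₁) = ψ x₀ + u / c₁ := by ring
          linarith [hh]
      _ = ENNReal.ofReal (ψ x₀) - ENNReal.ofReal (-u / c₁) :=
          ENNReal.ofReal_sub _ (div_nonneg (by linarith) hc₁.le)
      _ ≤ ENNReal.ofReal (ψ x₀) - conjFn ρ ψ := tsub_le_tsub_left hconj _
      _ ≤ S := le_iSup (fun χ : V →L[ℝ] ℝ => ENNReal.ofReal (χ x₀) - conjFn ρ χ) ψ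

/-- **Duality of the `Δ₂`-condition and the `∇₂`-condition** (Lemma 2.5). -/
theorem delta2_nabla2_duality (ρ : V → ℝ≥0∞)
    (hconv : ConvexENNReal ρ) (h0 : ρ 0 = 0) :
    (Delta2 ρ → Nabla2 (conjFn ρ)) ∧
    (Nabla2 ρ → Delta2 (conjFn ρ)) ∧
    (LowerSemicontinuous ρ →
      (Delta2 ρ ↔ Nabla2 (conjFn ρ)) ∧ (Nabla2 ρ ↔ Delta2 (conjFn ρ))) := by
  have e1 : ∀ (φ : V →L[ℝ] ℝ) (c : ℝ) (x : V), φ (c • x) = c * φ x := by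
    intro φ c x; rw [map_smul]; rfl
  have e2 : ∀ (φ : V →L[ℝ] ℝ) (x : V), ((2 : ℝ) • φ) x = 2 * φ x := by
    intro φ x; rw [ContinuousLinearMap.smul_apply]; rfl
  have hfwd1 : Delta2 ρ → Nabla2 (conjFn ρ) := fun hΔ =>
    core_delta_to_nabla hconv (fun (φ : V →L[ℝ] ℝ) (x : V) => φ x)
      (fun φ c x => e1 φ c x) (fun φ x => e2 φ x) hΔ
  have hfwd2 : Nabla2 ρ → Delta2 (conjFn ρ) := fun hN =>
    core_nabla_to_delta hconv h0 (fun (φ : V →L[ℝ] ℝ) (x : V) => φ x)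
      (fun φ c x => e1 φ c x) (fun φ x => e2 φ x) hN
  refine ⟨hfwd1, hfwd2, fun hlsc => ⟨⟨hfwd1, ?_⟩, ⟨hfwd2, ?_⟩⟩⟩
  · intro hN
    have hD : Delta2 (fun x : V => ⨆ φ : V →L[ℝ] ℝ, ENNReal.ofReal (φ x) - conjFn ρ φ) :=
      core_nabla_to_delta (conjFn_convex ρ) (conjFn_zero ρ)
        (fun (x : V) (φ : V →L[ℝ] ℝ) => φ x)
        (fun x c φ => by show (c • φ) x = c * φ x; rw [ContinuousLinearMap.smul_apply]; rfl)
        (fun x φ => by show φ ((2:ℝ) • x) = 2 * φ x; rw [map_smul]; rfl) hN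
    obtain ⟨C, hC⟩ := hD
    refine ⟨C, fun x hx => ?_⟩
    have hb1 := biconj ρ hconv h0 hlsc x
    have hb2 := biconj ρ hconv h0 hlsc ((2 : ℝ) • x)
    rw [hb2, hb1]
    exact hC x (by simpa only [← hb1] using hx)
  · intro hΔ
    have hN : Nabla2 (fun x : V => ⨆ φ : V →L[ℝ] ℝ, ENNReal.ofReal (φ x) - conjFn ρ φ) :=
      core_delta_to_nabla (conjFn_convex ρ)
        (fun (x : V) (φ : V →L[ℝ] ℝ) => φ x)
        (fun x c φ => by show (c • φ) x = c * φ x; rw [ContinuousLinearMap.smul_apply]; rfl)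
        (fun x φ => by show φ ((2:ℝ) • x) = 2 * φ x; rw [map_smul]; rfl) hΔ
    obtain ⟨K, hK2, hK⟩ := hN
    refine ⟨K, hK2, fun x hx => ?_⟩
    have hb1 := biconj ρ hconv h0 hlsc x
    have hb2 := biconj ρ hconv h0 hlsc ((2 : ℝ) • x)
    rw [hb2, hb1]
    exact hK x (by simpa only [← hb1] using hx)
end
end

section
/- Let X be a nonempty set and let E : F(X) → [0,∞] be convex, symmetric and reflexive with E(0) = 0. Then the following are equivalent: (i) E is lower semicontinuous with respect to pointwise convergence, the kernel of the Luxemburg seminorm on M(E) is {0}, and R(x,y) < ∞ for all x, y ∈ X; (ii) E is left-continuous, (M(E), ‖·‖_L) is a Banach space, and R_∞(x) < ∞ for all x ∈ X. -/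
open scoped ENNReal NNReal

noncomputable section

/-- The elementary resistance `R(x,y) = sup {f x − f y : E f ≤ 1}`. -/
noncomputable def eRes {X : Type*} (E : (X → ℝ) → ℝ≥0∞) (x y : X) : ℝ≥0∞ :=
  ⨆ (f : X → ℝ) (_ : E f ≤ 1), ENNReal.ofReal (f x - f y)

/-- The elementary resistance between `x` and `∞`: `R_∞(x) = sup {f x : E f ≤ 1}`. -/
noncomputable def eResInf {X : Type*} (E : (X → ℝ) → ℝ≥0∞) (x : X) : ℝ≥0∞ :=
  ⨆ (f : X → ℝ) (_ : E f ≤ 1), ENNReal.ofReal (f x)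

/-- `ρ` is left-continuous: `ρ (λ • x) → ρ x` as `λ → 1−`. -/
def LeftContinuousFunctional {W : Type*} [AddCommGroup W] [Module ℝ W] (ρ : W → ℝ≥0∞) : Prop :=
  ∀ x : W, Filter.Tendsto (fun lam : ℝ => ρ (lam • x))
    (nhdsWithin (1 : ℝ) (Set.Iio 1)) (nhds (ρ x))

/-- A witness that the seminormed space `(M(ρ), ‖·‖_L)` is reflexive, i.e. that the natural
isometric embedding into its bidual has dense image.  Equivalently, there is a reflexive
Banach space `B` (the bidual, a Banach space in which the canonical image of `M(ρ)` is dense)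
together with a linear map `T` on `M(ρ)` which is isometric with respect to the Luxemburg
seminorm and has dense range. -/
structure ReflexiveWitness {W : Type*} [AddCommGroup W] [Module ℝ W] (ρ : W → ℝ≥0∞) where
  B : Type*
  [normedInst : NormedAddCommGroup B]
  [nspaceInst : NormedSpace ℝ B]
  [completeInst : CompleteSpace B]
  reflexiveB : Function.Surjective (NormedSpace.inclusionInDoubleDual ℝ B)
  T : W → B
  map_add : ∀ f ∈ modularCone ρ, ∀ g ∈ modularCone ρ, T (f + g) = T f + T g
  map_smul : ∀ (c : ℝ), ∀ f ∈ modularCone ρ, T (c • f) = c • T f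
  isometric : ∀ f ∈ modularCone ρ, ENNReal.ofReal ‖T f‖ = luxemburg ρ f
  denseImage : DenseRange fun f : modularCone ρ => T f.1

/-- `ρ` is reflexive: the natural isometric embedding of `(M(ρ), ‖·‖_L)` into its bidual has
dense image. -/
def ReflexiveForm.{u, v} {W : Type u} [AddCommGroup W] [Module ℝ W] (ρ : W → ℝ≥0∞) : Prop :=
  Nonempty (ReflexiveWitness.{u, v} ρ)

open Filter

section Base
variable {W : Type*} [AddCommGroup W] [Module ℝ W] {ρ : W → ℝ≥0∞}
  (hconv : ConvexENNReal ρ) (h0 : ρ 0 = 0) (hsym : ∀ x : W, ρ (-x) = ρ x)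

/-- scaling bound from convexity -/
theorem E_smul_le (hconv : ConvexENNReal ρ) (h0 : ρ 0 = 0) {t : ℝ} (ht0 : 0 ≤ t) (ht1 : t ≤ 1)
    (x : W) : ρ (t • x) ≤ ENNReal.ofReal t * ρ x := by
  have := hconv x 0 t (1 - t) ht0 (by linarith) (by ring)
  simpa [h0, smul_zero] using this

theorem lux_le_of_E_le_one {lam : ℝ} (hlam : 0 < lam) {x : W} (h : ρ (lam⁻¹ • x) ≤ 1) :
    luxemburg ρ x ≤ ENNReal.ofReal lam := by
  exact iInf_le_of_le lam (iInf_le_of_le hlam (iInf_le_of_le h le_rfl))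

theorem exists_of_lux_lt {x : W} {c : ℝ≥0∞} (h : luxemburg ρ x < c) :
    ∃ lam : ℝ, 0 < lam ∧ ρ (lam⁻¹ • x) ≤ 1 ∧ ENNReal.ofReal lam < c := by
  rw [luxemburg] at h
  obtain ⟨lam, hlam⟩ := iInf_lt_iff.1 h
  obtain ⟨h1, h2⟩ := iInf_lt_iff.1 hlam
  obtain ⟨h3, h4⟩ := iInf_lt_iff.1 h2
  exact ⟨lam, h1, h3, h4⟩

theorem E_inv_smul_le_one_of_lux_lt (hconv : ConvexENNReal ρ) (h0 : ρ 0 = 0)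
    {x : W} {lam : ℝ} (hlam : 0 < lam) (h : luxemburg ρ x < ENNReal.ofReal lam) :
    ρ (lam⁻¹ • x) ≤ 1 := by
  obtain ⟨mu, hmu, hE, hlt⟩ := exists_of_lux_lt h
  have hmulam : mu < lam := by
    by_contra hc
    exact absurd hlt (not_lt.2 (ENNReal.ofReal_le_ofReal (not_lt.1 hc)))
  have hrw : lam⁻¹ • x = (mu / lam) • (mu⁻¹ • x) := by
    rw [smul_smul]; congr 1
    field_simp
  rw [hrw]
  calc ρ ((mu / lam) • (mu⁻¹ • x)) ≤ ENNReal.ofReal (mu / lam) * ρ (mu⁻¹ • x) :=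
        E_smul_le hconv h0 (by positivity) (by rw [div_le_one hlam]; linarith) _
    _ ≤ ENNReal.ofReal (mu / lam) * 1 := by gcongr
    _ ≤ 1 := by
        rw [mul_one]
        exact ENNReal.ofReal_le_one.2 (by rw [div_le_one hlam]; linarith)

theorem E_le_of_lux_lt (hconv : ConvexENNReal ρ) (h0 : ρ 0 = 0)
    {x : W} {mu : ℝ} (hmu : 0 < mu) (hmu1 : mu ≤ 1) (h : luxemburg ρ x < ENNReal.ofReal mu) :
    ρ x ≤ ENNReal.ofReal mu := by
  have h1 : ρ (mu⁻¹ • x) ≤ 1 := E_inv_smul_le_one_of_lux_lt hconv h0 hmu h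
  have hrw : x = mu • (mu⁻¹ • x) := by rw [smul_smul, mul_inv_cancel₀ hmu.ne', one_smul]
  calc ρ x = ρ (mu • (mu⁻¹ • x)) := by rw [← hrw]
    _ ≤ ENNReal.ofReal mu * ρ (mu⁻¹ • x) := E_smul_le hconv h0 hmu.le hmu1 _
    _ ≤ ENNReal.ofReal mu * 1 := by gcongr
    _ = ENNReal.ofReal mu := mul_one _

theorem zero_mem_cone (h0 : ρ 0 = 0) : (0 : W) ∈ modularCone ρ :=
  ⟨0, 0, le_rfl, by simp [h0], by simp⟩

theorem mem_cone_of_E_ne_top {x : W} (h : ρ x ≠ ⊤) : x ∈ modularCone ρ :=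
  ⟨1, x, zero_le_one, h, (one_smul _ _).symm⟩

theorem smul_mem_cone (hsym : ∀ x : W, ρ (-x) = ρ x) (c : ℝ) {x : W}
    (hx : x ∈ modularCone ρ) : c • x ∈ modularCone ρ := by
  obtain ⟨a, y, ha, hy, rfl⟩ := hx
  rcases le_or_gt 0 c with hc | hc
  · exact ⟨c * a, y, mul_nonneg hc ha, hy, by rw [smul_smul]⟩
  · refine ⟨(-c) * a, -y, mul_nonneg (by linarith) ha, by rw [hsym]; exact hy, ?_⟩
    rw [smul_smul]; rw [show -c * a = -(c*a) by ring, neg_smul, smul_neg, neg_neg]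

theorem neg_mem_cone (hsym : ∀ x : W, ρ (-x) = ρ x) {x : W}
    (hx : x ∈ modularCone ρ) : -x ∈ modularCone ρ := by
  simpa using smul_mem_cone hsym (-1) hx

theorem add_mem_cone (hconv : ConvexENNReal ρ) (h0 : ρ 0 = 0) {x y : W}
    (hx : x ∈ modularCone ρ) (hy : y ∈ modularCone ρ) : x + y ∈ modularCone ρ := by
  obtain ⟨a, u, ha, hu, rfl⟩ := hx
  obtain ⟨b, v, hb, hv, rfl⟩ := hy
  rcases eq_or_lt_of_le (add_nonneg ha hb) with hs | hs
  · have ha0 : a = 0 := by linarith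
    have hb0 : b = 0 := by linarith
    simp [ha0, hb0, zero_mem_cone h0]
  · refine ⟨a + b, (a / (a + b)) • u + (b / (a + b)) • v, le_of_lt hs, ?_, ?_⟩
    · have := hconv u v (a / (a+b)) (b / (a+b)) (by positivity) (by positivity)
        (by field_simp)
      intro htop
      rw [htop] at this
      have hfin : ENNReal.ofReal (a / (a+b)) * ρ u + ENNReal.ofReal (b / (a+b)) * ρ v ≠ ⊤ := by
        apply ENNReal.add_ne_top.2
        constructor <;> exact ENNReal.mul_ne_top ENNReal.ofReal_ne_top (by assumption)
      exact hfin (top_le_iff.1 this)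
    · rw [smul_add, smul_smul, smul_smul]
      congr 2 <;> field_simp

theorem sub_mem_cone (hconv : ConvexENNReal ρ) (h0 : ρ 0 = 0) (hsym : ∀ x : W, ρ (-x) = ρ x)
    {x y : W} (hx : x ∈ modularCone ρ) (hy : y ∈ modularCone ρ) : x - y ∈ modularCone ρ := by
  rw [sub_eq_add_neg]; exact add_mem_cone hconv h0 hx (neg_mem_cone hsym hy)

theorem lux_neg (hsym : ∀ x : W, ρ (-x) = ρ x) (x : W) : luxemburg ρ (-x) = luxemburg ρ x := by
  unfold luxemburg
  congr 1; ext lam; congr 1; ext hlam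
  have : ρ (lam⁻¹ • -x) = ρ (lam⁻¹ • x) := by rw [smul_neg, hsym]
  rw [this]

theorem lux_lt_top_of_mem (hconv : ConvexENNReal ρ) (h0 : ρ 0 = 0) {x : W}
    (hx : x ∈ modularCone ρ) : luxemburg ρ x < ⊤ := by
  obtain ⟨a, y, ha, hy, rfl⟩ := hx
  rcases eq_or_lt_of_le ha with rfl | ha'
  · refine lt_of_le_of_lt (lux_le_of_E_le_one one_pos ?_) (by simp)
    simp [h0]
  · -- choose lam with (lam)⁻¹ * a small
    set c := (ρ y).toReal + 1 with hc
    have hcpos : 0 < c := by positivity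
    have h1 : ρ ((a * c)⁻¹ • a • y) ≤ 1 := by
      have : (a * c)⁻¹ • a • y = c⁻¹ • y := by
        rw [smul_smul]; congr 1; field_simp
      rw [this]
      calc ρ (c⁻¹ • y) ≤ ENNReal.ofReal c⁻¹ * ρ y :=
            E_smul_le hconv h0 (by positivity) (by
              rw [inv_le_one_iff₀]; right; rw [hc]; have := ENNReal.toReal_nonneg (a := ρ y); linarith) _
        _ ≤ 1 := by
            rw [← ENNReal.ofReal_toReal hy, ← ENNReal.ofReal_mul (by positivity)]
            apply ENNReal.ofReal_le_one.2
            rw [inv_mul_le_iff₀ hcpos, hc]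
            have := ENNReal.toReal_nonneg (a := ρ y); nlinarith
    exact lt_of_le_of_lt (lux_le_of_E_le_one (by positivity) h1) (by simp)

theorem mem_cone_of_lux_lt_top (hconv : ConvexENNReal ρ) {x : W}
    (h : luxemburg ρ x < ⊤) : x ∈ modularCone ρ := by
  obtain ⟨lam, hlam, hE, _⟩ := exists_of_lux_lt h
  exact ⟨lam, lam⁻¹ • x, hlam.le, by intro ht; rw [ht] at hE; simp at hE, by
    rw [smul_smul, mul_inv_cancel₀ hlam.ne', one_smul]⟩

end Base

section L2
variable {X : Type*} {E : (X → ℝ) → ℝ≥0∞}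

/-- limits respect lsc upper bounds -/
theorem le_of_lsc {ι : Type*} {F : Filter ι} [F.NeBot] (hlsc : LowerSemicontinuous E)
    {φ : ι → X → ℝ} {f : X → ℝ} (hφ : Filter.Tendsto φ F (nhds f))
    {c : ℝ≥0∞} (hc : ∀ᶠ i in F, E (φ i) ≤ c) : E f ≤ c := by
  by_contra h
  have h2 := hφ.eventually (hlsc f c (lt_of_not_ge h))
  have := (h2.and hc).exists
  obtain ⟨i, h3, h4⟩ := this
  exact absurd h4 (not_le.2 h3)

theorem eval_le_of_E_le_one {x : X} {f : X → ℝ} (hf : E f ≤ 1) :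
    ENNReal.ofReal (f x) ≤ eResInf E x := le_iSup₂_of_le f hf le_rfl

theorem eval_abs_le (hsym : ∀ f : X → ℝ, E (-f) = E f) {x : X} (hR : eResInf E x ≠ ⊤)
    {f : X → ℝ} (hf : E f ≤ 1) : |f x| ≤ (eResInf E x).toReal := by
  have h1 : f x ≤ (eResInf E x).toReal := by
    rcases le_or_gt (f x) 0 with h | h
    · exact h.trans ENNReal.toReal_nonneg
    · have := eval_le_of_E_le_one (x := x) hf
      rw [← ENNReal.ofReal_toReal hR] at this
      exact (ENNReal.ofReal_le_ofReal_iff ENNReal.toReal_nonneg).1 this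
  have h2 : -f x ≤ (eResInf E x).toReal := by
    have hf' : E (-f) ≤ 1 := by rw [hsym]; exact hf
    rcases le_or_gt (-f x) 0 with h | h
    · exact h.trans ENNReal.toReal_nonneg
    · have := eval_le_of_E_le_one (x := x) hf'
      simp only [Pi.neg_apply] at this
      rw [← ENNReal.ofReal_toReal hR] at this
      exact (ENNReal.ofReal_le_ofReal_iff ENNReal.toReal_nonneg).1 this
  exact abs_le.2 ⟨by linarith, h1⟩

/-- evaluation bound via Luxemburg norm -/
theorem eval_abs_le_of_lux_lt (hconv : ConvexENNReal E) (h0 : E 0 = 0)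
    (hsym : ∀ f : X → ℝ, E (-f) = E f) {x : X} (hR : eResInf E x ≠ ⊤)
    {f : X → ℝ} {lam : ℝ} (hlam : 0 < lam) (h : luxemburg E f < ENNReal.ofReal lam) :
    |f x| ≤ lam * (eResInf E x).toReal := by
  have h1 : E (lam⁻¹ • f) ≤ 1 := E_inv_smul_le_one_of_lux_lt hconv h0 hlam h
  have := eval_abs_le hsym hR h1
  simp only [Pi.smul_apply, smul_eq_mul, abs_mul, abs_inv, abs_of_pos hlam] at this
  rw [inv_mul_le_iff₀ hlam] at this
  exact this

end L2

section L3
variable {X : Type*} {E : (X → ℝ) → ℝ≥0∞}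

theorem leftCont_of_lsc (hconv : ConvexENNReal E) (h0 : E 0 = 0)
    (hlsc : LowerSemicontinuous E) : LeftContinuousFunctional E := by
  intro f
  rw [tendsto_order]
  constructor
  · intro c hc
    have htend : Filter.Tendsto (fun lam : ℝ => lam • f) (nhdsWithin 1 (Set.Iio 1)) (nhds f) := by
      apply tendsto_pi_nhds.2
      intro x
      simp only [Pi.smul_apply, smul_eq_mul]
      have h1 : Filter.Tendsto (fun lam : ℝ => lam * f x) (nhds 1) (nhds (1 * f x)) :=
        (continuous_id.mul continuous_const).tendsto 1
      rw [one_mul] at h1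
      exact h1.mono_left nhdsWithin_le_nhds
    exact htend.eventually (hlsc f c hc)
  · intro c hc
    have h1 : ∀ᶠ lam : ℝ in nhdsWithin 1 (Set.Iio 1), 0 < lam :=
      eventually_nhdsWithin_of_eventually_nhds (eventually_gt_nhds one_pos)
    have h2 : ∀ᶠ lam : ℝ in nhdsWithin 1 (Set.Iio 1), lam < 1 :=
      eventually_mem_nhdsWithin
    filter_upwards [h1, h2] with lam hl0 hl1
    calc E (lam • f) ≤ ENNReal.ofReal lam * E f := E_smul_le hconv h0 hl0.le hl1.le f
      _ ≤ 1 * E f := by gcongr; exact ENNReal.ofReal_le_one.2 hl1.le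
      _ = E f := one_mul _
      _ < c := hc

theorem diff_le_of_E_le_one {x y : X} (hR : eRes E x y ≠ ⊤) {f : X → ℝ} (hf : E f ≤ 1) :
    f x - f y ≤ (eRes E x y).toReal := by
  rcases le_or_gt (f x - f y) 0 with h | h
  · exact h.trans ENNReal.toReal_nonneg
  · have h1 : ENNReal.ofReal (f x - f y) ≤ eRes E x y := le_iSup₂_of_le f hf le_rfl
    rw [← ENNReal.ofReal_toReal hR] at h1
    exact (ENNReal.ofReal_le_ofReal_iff ENNReal.toReal_nonneg).1 h1

theorem eResInf_ne_top_forward [Nonempty X] (hconv : ConvexENNReal E) (h0 : E 0 = 0)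
    (hlsc : LowerSemicontinuous E)
    (hker : ∀ f ∈ modularCone E, luxemburg E f = 0 → f = 0)
    (hres : ∀ x y : X, eRes E x y ≠ ⊤) (x : X) : eResInf E x ≠ ⊤ := by
  intro htop
  -- extract a sequence with large values at x
  have step1 : ∀ n : ℕ, ∃ f : X → ℝ, E f ≤ 1 ∧ (n + 1 : ℝ) < f x := by
    by_contra hcon
    push_neg at hcon
    obtain ⟨n, hn⟩ := hcon
    have : eResInf E x ≤ ENNReal.ofReal (n + 1) :=
      iSup₂_le fun f hf => ENNReal.ofReal_le_ofReal (hn f hf)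
    rw [htop] at this
    exact (lt_irrefl _ (lt_of_le_of_lt this (by simp))).elim
  choose F hF1 hF2 using step1
  have hpos : ∀ n : ℕ, (0:ℝ) < F n x := fun n => lt_trans (by positivity) (hF2 n)
  set g : ℕ → X → ℝ := fun n => (F n x)⁻¹ • F n with hg
  set K : X → ℝ := fun y => (eRes E x y).toReal + (eRes E y x).toReal with hK
  have hKnn : ∀ y, 0 ≤ K y := fun y => add_nonneg ENNReal.toReal_nonneg ENNReal.toReal_nonneg
  have hbound : ∀ (n : ℕ) (y : X), |g n y - 1| ≤ K y / (n + 1) := by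
    intro n y
    have h1 : F n x - F n y ≤ (eRes E x y).toReal := diff_le_of_E_le_one (hres x y) (hF1 n)
    have h2 : F n y - F n x ≤ (eRes E y x).toReal := diff_le_of_E_le_one (hres y x) (hF1 n)
    have h3 : |F n y - F n x| ≤ K y := by
      rw [abs_le]
      constructor
      · have := ENNReal.toReal_nonneg (a := eRes E y x); rw [hK]; simp; linarith
      · have := ENNReal.toReal_nonneg (a := eRes E x y); rw [hK]; simp; linarith
    have h4 : g n y - 1 = (F n y - F n x) / F n x := by
      rw [hg]; simp only [Pi.smul_apply, smul_eq_mul]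
      rw [inv_mul_eq_div, sub_div, div_self (hpos n).ne']
    rw [h4, abs_div, abs_of_pos (hpos n)]
    have hn1 : (0:ℝ) < n + 1 := by positivity
    have hle : (n:ℝ) + 1 ≤ F n x := (hF2 n).le
    gcongr
  -- pointwise convergence of g n to the constant function 1
  have hgt : ∀ y : X, Filter.Tendsto (fun n => g n y) Filter.atTop (nhds 1) := by
    intro y
    have hKt : Filter.Tendsto (fun n : ℕ => K y / (n + 1)) Filter.atTop (nhds 0) := by
      have h := (tendsto_const_div_atTop_nhds_zero_nat (K y)).comp
        (Filter.tendsto_add_atTop_nat 1)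
      refine h.congr fun n => ?_
      simp only [Function.comp_apply]
      push_cast
      ring
    have hsq := squeeze_zero_norm (f := fun n => g n y - 1) (fun n => hbound n y) hKt
    have h2 := hsq.add_const 1
    simp only [sub_add_cancel, zero_add] at h2
    exact h2
  -- E (t • 1) ≤ 1 for every t > 0
  have hEt : ∀ t : ℝ, 0 < t → E (t • (1 : X → ℝ)) ≤ 1 := by
    intro t ht
    have htend : Filter.Tendsto (fun n => t • g n) Filter.atTop (nhds (t • (1 : X → ℝ))) := by
      apply tendsto_pi_nhds.2
      intro y
      simp only [Pi.smul_apply, smul_eq_mul, Pi.one_apply, mul_one]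
      simpa using (hgt y).const_mul t
    apply le_of_lsc hlsc htend
    filter_upwards [Filter.eventually_ge_atTop (Nat.ceil t)] with n hn
    have hcoef : t / F n x ≤ 1 := by
      rw [div_le_one (hpos n)]
      calc t ≤ (Nat.ceil t : ℝ) := Nat.le_ceil t
        _ ≤ (n : ℝ) := by exact_mod_cast hn
        _ ≤ F n x := by have := hF2 n; linarith
    have hrw : t • g n = (t / F n x) • F n := by
      rw [hg, smul_smul, div_eq_mul_inv]
    rw [hrw]
    calc E ((t / F n x) • F n) ≤ ENNReal.ofReal (t / F n x) * E (F n) :=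
          E_smul_le hconv h0 (div_nonneg ht.le (hpos n).le) hcoef _
      _ ≤ 1 * 1 := mul_le_mul' (ENNReal.ofReal_le_one.2 hcoef) (hF1 n)
      _ = 1 := one_mul _
  -- the constant function 1 lies in the cone with zero Luxemburg norm
  have h1mem : (1 : X → ℝ) ∈ modularCone E :=
    mem_cone_of_E_ne_top (by
      have := hEt 1 one_pos
      rw [one_smul] at this
      exact fun ht => by rw [ht] at this; simp at this)
  have hlux0 : luxemburg E (1 : X → ℝ) = 0 := by
    refine le_antisymm ?_ zero_le
    refine ENNReal.le_of_forall_pos_le_add fun ε hε _ => ?_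
    have hE1 : E ((ε : ℝ)⁻¹ • (1 : X → ℝ)) ≤ 1 := hEt (ε : ℝ)⁻¹ (inv_pos.2 (by exact_mod_cast hε))
    calc luxemburg E (1 : X → ℝ) ≤ ENNReal.ofReal (ε : ℝ) :=
          lux_le_of_E_le_one (by positivity) hE1
      _ = (ε : ℝ≥0∞) := ENNReal.ofReal_coe_nnreal
      _ ≤ 0 + ε := by simp
  have := hker _ h1mem hlux0
  have h2 := congrFun this (Classical.arbitrary X)
  simp at h2

end L3

section L4
variable {X : Type*} {E : (X → ℝ) → ℝ≥0∞}

theorem complete_of_lsc (hconv : ConvexENNReal E) (h0 : E 0 = 0)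
    (hsym : ∀ f : X → ℝ, E (-f) = E f) (hlsc : LowerSemicontinuous E)
    (hRinf : ∀ x : X, eResInf E x ≠ ⊤)
    (f : ℕ → X → ℝ) (hmem : ∀ n, f n ∈ modularCone E)
    (hC : ∀ ε : ℝ≥0∞, 0 < ε → ∃ N : ℕ, ∀ m ≥ N, ∀ n ≥ N, luxemburg E (f m - f n) < ε) :
    ∃ g ∈ modularCone E,
      Filter.Tendsto (fun n => luxemburg E (f n - g)) Filter.atTop (nhds 0) := by
  -- pointwise Cauchy
  have hcau : ∀ x : X, CauchySeq (fun n => f n x) := by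
    intro x
    rw [Metric.cauchySeq_iff]
    intro δ hδ
    set Rx := (eResInf E x).toReal with hRx
    have hRxnn : 0 ≤ Rx := ENNReal.toReal_nonneg
    set lam := δ / (Rx + 1) with hlam
    have hlampos : 0 < lam := by positivity
    obtain ⟨N, hN⟩ := hC (ENNReal.ofReal lam) (ENNReal.ofReal_pos.2 hlampos)
    refine ⟨N, fun m hm n hn => ?_⟩
    have := eval_abs_le_of_lux_lt hconv h0 hsym (hRinf x) hlampos (hN m hm n hn)
    rw [Real.dist_eq]
    have heq : f m x - f n x = (f m - f n) x := by simp
    rw [heq]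
    calc |(f m - f n) x| ≤ lam * Rx := this
      _ = δ * (Rx / (Rx + 1)) := by rw [hlam]; ring
      _ < δ * 1 := by
          apply mul_lt_mul_of_pos_left _ hδ
          rw [div_lt_one (by positivity)]; linarith
      _ = δ := mul_one _
  have hex := fun x => cauchySeq_tendsto_of_complete (hcau x)
  choose g hg using hex
  -- key estimate
  have key : ∀ ε : ℝ, 0 < ε → ∃ N : ℕ, ∀ n ≥ N, E (ε⁻¹ • (g - f n)) ≤ 1 := by
    intro ε hε
    obtain ⟨N, hN⟩ := hC (ENNReal.ofReal ε) (ENNReal.ofReal_pos.2 hε)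
    refine ⟨N, fun n hn => ?_⟩
    have htend : Filter.Tendsto (fun m => ε⁻¹ • (f m - f n)) Filter.atTop
        (nhds (ε⁻¹ • (g - f n))) := by
      apply tendsto_pi_nhds.2
      intro x
      simp only [Pi.smul_apply, Pi.sub_apply, smul_eq_mul]
      exact ((hg x).sub_const (f n x)).const_mul _
    apply le_of_lsc hlsc htend
    filter_upwards [Filter.eventually_ge_atTop N] with m hm
    exact E_inv_smul_le_one_of_lux_lt hconv h0 hε (hN m hm n hn)
  -- g is in the cone
  obtain ⟨N₀, hN₀⟩ := key 1 one_pos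
  have hgmem : g ∈ modularCone E := by
    have h1 : E (g - f N₀) ≠ ⊤ := by
      have := hN₀ N₀ le_rfl
      rw [inv_one, one_smul] at this
      exact fun ht => by rw [ht] at this; simp at this
    have h2 : g - f N₀ ∈ modularCone E := mem_cone_of_E_ne_top h1
    have : g = (g - f N₀) + f N₀ := by abel
    rw [this]
    exact add_mem_cone hconv h0 h2 (hmem N₀)
  refine ⟨g, hgmem, ?_⟩
  rw [ENNReal.tendsto_atTop_zero]
  intro ε hε
  rcases eq_or_ne ε ⊤ with rfl | hne
  · exact ⟨0, fun n _ => le_top⟩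
  · have hεr : 0 < ε.toReal := ENNReal.toReal_pos hε.ne' hne
    obtain ⟨N, hN⟩ := key ε.toReal hεr
    refine ⟨N, fun n hn => ?_⟩
    have heq : f n - g = -(g - f n) := by abel
    rw [heq, lux_neg hsym]
    calc luxemburg E (g - f n) ≤ ENNReal.ofReal ε.toReal :=
          lux_le_of_E_le_one hεr (hN n hn)
      _ = ε := ENNReal.ofReal_toReal hne

end L4

section Base2
variable {W : Type*} [AddCommGroup W] [Module ℝ W] {ρ : W → ℝ≥0∞}

theorem E_smul_of_lux_lt (hconv : ConvexENNReal ρ) (h0 : ρ 0 = 0) {h : W} {t μ : ℝ}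
    (ht : 0 < t) (hμ0 : 0 < μ) (hμ1 : μ ≤ 1)
    (hl : luxemburg ρ h < ENNReal.ofReal (μ / t)) : ρ (t • h) ≤ ENNReal.ofReal μ := by
  obtain ⟨ν, hν, hE, hlt⟩ := exists_of_lux_lt hl
  have hνμ : ν < μ / t := by
    by_contra hcon
    exact absurd hlt (not_lt.2 (ENNReal.ofReal_le_ofReal (not_lt.1 hcon)))
  have hlux : luxemburg ρ (t • h) ≤ ENNReal.ofReal (t * ν) := by
    apply lux_le_of_E_le_one (by positivity)
    have : (t * ν)⁻¹ • t • h = ν⁻¹ • h := by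
      rw [smul_smul]; congr 1; field_simp
    rw [this]; exact hE
  have hlt2 : luxemburg ρ (t • h) < ENNReal.ofReal μ := by
    apply lt_of_le_of_lt hlux
    apply ENNReal.ofReal_lt_ofReal_iff hμ0 |>.2
    rw [mul_comm]
    exact (lt_div_iff₀ ht).1 hνμ
  exact E_le_of_lux_lt hconv h0 hμ0 hμ1 hlt2

theorem E_convex_le (hconv : ConvexENNReal ρ) {u v : W} {a b : ℝ} (ha : 0 ≤ a) (hb : 0 ≤ b)
    (hab : a + b = 1) {c : ℝ≥0∞} (hu : ρ u ≤ c) (hv : ρ v ≤ c) : ρ (a • u + b • v) ≤ c := by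
  calc ρ (a • u + b • v) ≤ ENNReal.ofReal a * ρ u + ENNReal.ofReal b * ρ v :=
        hconv u v a b ha hb hab
    _ ≤ ENNReal.ofReal a * c + ENNReal.ofReal b * c := by gcongr
    _ = (ENNReal.ofReal a + ENNReal.ofReal b) * c := (add_mul _ _ _).symm
    _ = ENNReal.ofReal (a + b) * c := by rw [ENNReal.ofReal_add ha hb]
    _ = c := by rw [hab, ENNReal.ofReal_one, one_mul]

end Base2

section L6
variable {X : Type*} {E : (X → ℝ) → ℝ≥0∞}

theorem lsc_backward [Nonempty X] (hconv : ConvexENNReal E) (h0 : E 0 = 0)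
    (hsym : ∀ f : X → ℝ, E (-f) = E f) (W : ReflexiveWitness E)
    (hlc : LeftContinuousFunctional E)
    (hker : ∀ f ∈ modularCone E, luxemburg E f = 0 → f = 0)
    (hcomp : ∀ f : ℕ → X → ℝ, (∀ n, f n ∈ modularCone E) →
      (∀ ε : ℝ≥0∞, 0 < ε → ∃ N : ℕ, ∀ m ≥ N, ∀ n ≥ N, luxemburg E (f m - f n) < ε) →
      ∃ g ∈ modularCone E,
        Filter.Tendsto (fun n => luxemburg E (f n - g)) Filter.atTop (nhds 0))
    (hRinf : ∀ x : X, eResInf E x ≠ ⊤) :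
    LowerSemicontinuous E := by
  letI : NormedAddCommGroup W.B := W.normedInst
  letI : NormedSpace ℝ W.B := W.nspaceInst
  letI : CompleteSpace W.B := W.completeInst
  set M := modularCone E with hM
  -- W.T is "linear" with the isometry property
  have hTneg : ∀ g ∈ M, W.T (-g) = -(W.T g) := by
    intro g hg
    have := W.map_smul (-1) g hg
    simpa using this
  have hTsub : ∀ g ∈ M, ∀ h ∈ M, W.T (g - h) = W.T g - W.T h := by
    intro g hg h hh
    have h1 : g - h = g + (-h) := sub_eq_add_neg g h
    rw [h1, W.map_add g hg (-h) (neg_mem_cone hsym hh), hTneg h hh, sub_eq_add_neg]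
  have hiso' : ∀ g ∈ M, ∀ h ∈ M, ENNReal.ofReal ‖W.T g - W.T h‖ = luxemburg E (g - h) := by
    intro g hg h hh
    rw [← hTsub g hg h hh]
    exact W.isometric _ (sub_mem_cone hconv h0 hsym hg hh)
  have huniq : ∀ g ∈ M, ∀ h ∈ M, W.T g = W.T h → g = h := by
    intro g hg h hh he
    have h1 : luxemburg E (g - h) = 0 := by
      rw [← hiso' g hg h hh, he]
      simp
    have := hker _ (sub_mem_cone hconv h0 hsym hg hh) h1
    exact sub_eq_zero.1 this
  -- surjectivity of W.T onto B
  have hsurj : ∀ b : W.B, ∃ g ∈ M, W.T g = b := by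
    intro b
    have hb : b ∈ closure (Set.range fun f : M => W.T f.1) := W.denseImage b
    obtain ⟨u, hu, hub⟩ := mem_closure_iff_seq_limit.1 hb
    have hv : ∀ n, ∃ g ∈ M, W.T g = u n := by
      intro n
      obtain ⟨⟨g, hg⟩, hgu⟩ := hu n
      exact ⟨g, hg, hgu⟩
    choose v hv1 hv2 using hv
    have hucau : CauchySeq u := hub.cauchySeq
    have hcauchy : ∀ ε : ℝ≥0∞, 0 < ε → ∃ N : ℕ, ∀ m ≥ N, ∀ n ≥ N,
        luxemburg E (v m - v n) < ε := by
      intro ε hε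
      rcases eq_or_ne ε ⊤ with rfl | hne
      · exact ⟨0, fun m _ n _ =>
          lt_of_lt_of_le (lux_lt_top_of_mem hconv h0
            (sub_mem_cone hconv h0 hsym (hv1 m) (hv1 n))) le_rfl⟩
      · have hεr : 0 < ε.toReal := ENNReal.toReal_pos hε.ne' hne
        obtain ⟨N, hN⟩ := Metric.cauchySeq_iff.1 hucau ε.toReal hεr
        refine ⟨N, fun m hm n hn => ?_⟩
        have h1 : luxemburg E (v m - v n) = ENNReal.ofReal ‖u m - u n‖ := by
          rw [← hiso' _ (hv1 m) _ (hv1 n), hv2 m, hv2 n]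
        rw [h1]
        calc ENNReal.ofReal ‖u m - u n‖ < ENNReal.ofReal ε.toReal := by
              rw [ENNReal.ofReal_lt_ofReal_iff hεr]
              rw [← dist_eq_norm]
              exact hN m hm n hn
          _ = ε := ENNReal.ofReal_toReal hne
    obtain ⟨g, hgM, hgt⟩ := hcomp v hv1 hcauchy
    refine ⟨g, hgM, ?_⟩
    have hnorm : Filter.Tendsto (fun n => ‖u n - W.T g‖) Filter.atTop (nhds 0) := by
      have h1 : ∀ n, ENNReal.ofReal ‖u n - W.T g‖ = luxemburg E (v n - g) := by
        intro n
        rw [← hv2 n]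
        exact hiso' _ (hv1 n) _ hgM
      have h2 : Filter.Tendsto (fun n => ENNReal.ofReal ‖u n - W.T g‖) Filter.atTop (nhds 0) := by
        rw [funext h1]; exact hgt
      have h3 := (ENNReal.tendsto_toReal (show (0:ℝ≥0∞) ≠ ⊤ by simp)).comp h2
      rw [ENNReal.toReal_zero] at h3
      exact h3.congr fun n => by
        simp [Function.comp, ENNReal.toReal_ofReal (norm_nonneg _)]
    have : Filter.Tendsto u Filter.atTop (nhds (W.T g)) :=
      tendsto_iff_norm_sub_tendsto_zero.2 hnorm
    exact tendsto_nhds_unique this hub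
  choose inv hinv1 hinv2 using hsurj
  have hinvT : ∀ g ∈ M, inv (W.T g) = g := fun g hg =>
    huniq _ (hinv1 _) g hg (hinv2 _)
  have hinv_add : ∀ b b' : W.B, inv (b + b') = inv b + inv b' := by
    intro b b'
    apply huniq _ (hinv1 _) _ (add_mem_cone hconv h0 (hinv1 b) (hinv1 b'))
    rw [W.map_add _ (hinv1 b) _ (hinv1 b'), hinv2, hinv2, hinv2]
  have hinv_smul : ∀ (c : ℝ) (b : W.B), inv (c • b) = c • inv b := by
    intro c b
    apply huniq _ (hinv1 _) _ (smul_mem_cone hsym c (hinv1 b))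
    rw [W.map_smul c _ (hinv1 b), hinv2, hinv2]
  have hinv_norm : ∀ b : W.B, luxemburg E (inv b) = ENNReal.ofReal ‖b‖ := by
    intro b
    rw [← W.isometric _ (hinv1 b), hinv2]
  -- evaluation functionals
  have heval : ∀ x : X, ∃ ℓ : W.B →L[ℝ] ℝ, ∀ b : W.B, ℓ b = inv b x := by
    intro x
    set Rx := (eResInf E x).toReal with hRx
    have hRxnn : 0 ≤ Rx := ENNReal.toReal_nonneg
    have hbd : ∀ b : W.B, |inv b x| ≤ Rx * ‖b‖ := by
      intro b
      apply le_of_forall_pos_le_add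
      intro ε hε
      set δ := ε / (Rx + 1) with hδ
      have hδpos : 0 < δ := by positivity
      have hlt : luxemburg E (inv b) < ENNReal.ofReal (‖b‖ + δ) := by
        rw [hinv_norm b]
        exact ENNReal.ofReal_lt_ofReal_iff (by positivity) |>.2 (by linarith)
      have := eval_abs_le_of_lux_lt hconv h0 hsym (hRinf x)
        (by positivity : (0:ℝ) < ‖b‖ + δ) hlt
      calc |inv b x| ≤ (‖b‖ + δ) * Rx := this
        _ = Rx * ‖b‖ + δ * Rx := by ring
        _ ≤ Rx * ‖b‖ + ε := by
            have : δ * Rx ≤ ε := by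
              rw [hδ, div_mul_eq_mul_div, div_le_iff₀ (by positivity : (0:ℝ) < Rx + 1)]
              nlinarith
            linarith
    refine ⟨LinearMap.mkContinuous
      { toFun := fun b => inv b x
        map_add' := fun b b' => by rw [hinv_add]; rfl
        map_smul' := fun c b => by rw [hinv_smul]; rfl } Rx (fun b => ?_), fun b => rfl⟩
    simpa using hbd b
  choose ℓev hℓev using heval
  -- main LSC argument
  intro f c hc
  by_contra hcon
  rw [Filter.not_eventually] at hcon
  simp only [not_lt] at hcon
  have hFne : (nhds f ⊓ Filter.principal {g : X → ℝ | E g ≤ c}).NeBot :=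
    Filter.frequently_iff_neBot.1 hcon
  set S : Set (X → ℝ) := {g | E g ≤ c} with hS
  set U := Ultrafilter.of (nhds f ⊓ Filter.principal S) with hUdef
  have hUle : (U : Filter (X → ℝ)) ≤ nhds f ⊓ Filter.principal S := Ultrafilter.of_le _
  have hUS : S ∈ U := hUle (Filter.mem_inf_of_right (Filter.mem_principal_self S))
  have hUnhds : (U : Filter (X → ℝ)) ≤ nhds f := hUle.trans inf_le_left
  have hUev : ∀ x : X, Filter.Tendsto (fun g : X → ℝ => g x) U (nhds (f x)) :=
    fun x => ((continuous_apply x).tendsto f).mono_left hUnhds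
  have hcne : c ≠ ⊤ := ne_top_of_lt hc
  set C : ℝ := max c.toReal 1 with hC
  have hC1 : 1 ≤ C := le_max_right _ _
  have hCpos : 0 < C := lt_of_lt_of_le one_pos hC1
  have hmemS : ∀ g ∈ S, g ∈ M := fun g hg =>
    mem_cone_of_E_ne_top (ne_top_of_le_ne_top hcne hg)
  have hluxS : ∀ g ∈ S, luxemburg E g ≤ ENNReal.ofReal C := by
    intro g hg
    apply lux_le_of_E_le_one hCpos
    calc E (C⁻¹ • g) ≤ ENNReal.ofReal C⁻¹ * E g :=
          E_smul_le hconv h0 (by positivity) (by rw [inv_le_one_iff₀]; right; exact hC1) g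
      _ ≤ ENNReal.ofReal C⁻¹ * ENNReal.ofReal C := by
          gcongr
          calc E g ≤ c := hg
            _ = ENNReal.ofReal c.toReal := (ENNReal.ofReal_toReal hcne).symm
            _ ≤ ENNReal.ofReal C := ENNReal.ofReal_le_ofReal (le_max_left _ _)
      _ = ENNReal.ofReal (C⁻¹ * C) := (ENNReal.ofReal_mul (by positivity)).symm
      _ = 1 := by rw [inv_mul_cancel₀ hCpos.ne', ENNReal.ofReal_one]
  have hnormS : ∀ g ∈ S, ‖W.T g‖ ≤ C := by
    intro g hg
    have h1 : ENNReal.ofReal ‖W.T g‖ ≤ ENNReal.ofReal C := by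
      rw [W.isometric g (hmemS g hg)]; exact hluxS g hg
    exact (ENNReal.ofReal_le_ofReal_iff hCpos.le).1 h1
  -- ultrafilter limits of functionals along the net
  have hlim : ∀ ℓ : W.B →L[ℝ] ℝ, ∃ a : ℝ,
      Filter.Tendsto (fun g : X → ℝ => ℓ (W.T g)) U (nhds a) ∧ |a| ≤ C * ‖ℓ‖ := by
    intro ℓ
    have hmem : Set.Icc (-(C * ‖ℓ‖)) (C * ‖ℓ‖) ∈
        Filter.map (fun g : X → ℝ => ℓ (W.T g)) (U : Filter (X → ℝ)) := by
      rw [Filter.mem_map]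
      apply Filter.mem_of_superset hUS
      intro g hg
      have h1 : |ℓ (W.T g)| ≤ C * ‖ℓ‖ := by
        calc |ℓ (W.T g)| = ‖ℓ (W.T g)‖ := (Real.norm_eq_abs _).symm
          _ ≤ ‖ℓ‖ * ‖W.T g‖ := ℓ.le_opNorm _
          _ ≤ ‖ℓ‖ * C := by gcongr; exact hnormS g hg
          _ = C * ‖ℓ‖ := mul_comm _ _
      exact Set.mem_Icc.2 (abs_le.1 h1)
    obtain ⟨a, haI, hale⟩ := isCompact_Icc.ultrafilter_le_nhds
      (Ultrafilter.map (fun g : X → ℝ => ℓ (W.T g)) U) (by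
        rw [Ultrafilter.coe_map]
        exact Filter.le_principal_iff.2 hmem)
    rw [Ultrafilter.coe_map] at hale
    exact ⟨a, hale, abs_le.2 (Set.mem_Icc.1 haI)⟩
  choose Lam hLam1 hLam2 using hlim
  have hLam_add : ∀ ℓ ℓ' : W.B →L[ℝ] ℝ, Lam (ℓ + ℓ') = Lam ℓ + Lam ℓ' := fun ℓ ℓ' =>
    tendsto_nhds_unique (hLam1 (ℓ + ℓ'))
      (((hLam1 ℓ).add (hLam1 ℓ')).congr fun g => by simp)
  have hLam_smul : ∀ (r : ℝ) (ℓ : W.B →L[ℝ] ℝ), Lam (r • ℓ) = r * Lam ℓ := fun r ℓ =>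
    tendsto_nhds_unique (hLam1 (r • ℓ))
      (((hLam1 ℓ).const_mul r).congr fun g => by simp)
  obtain ⟨b, hb⟩ := W.reflexiveB (LinearMap.mkContinuous
    { toFun := Lam
      map_add' := hLam_add
      map_smul' := fun r ℓ => by simp only [smul_eq_mul, RingHom.id_apply]; exact hLam_smul r ℓ }
    C (fun ℓ => by simpa using hLam2 ℓ))
  have hbl : ∀ ℓ : W.B →L[ℝ] ℝ, ℓ b = Lam ℓ := by
    intro ℓ
    have h1 : (NormedSpace.inclusionInDoubleDual ℝ W.B b) ℓ = ℓ b :=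
      NormedSpace.dual_def ℝ W.B b ℓ
    rw [hb] at h1
    rw [← h1]
    rfl
  -- identification of the pointwise limit
  have hfx : ∀ x : X, inv b x = f x := by
    intro x
    have h1 : Filter.Tendsto (fun g : X → ℝ => (ℓev x) (W.T g)) U (nhds (Lam (ℓev x))) :=
      hLam1 _
    have h2 : ∀ᶠ g : X → ℝ in U, (ℓev x) (W.T g) = g x := by
      filter_upwards [hUS] with g hg
      rw [hℓev x (W.T g), hinvT g (hmemS g hg)]
    have h3 : Filter.Tendsto (fun g : X → ℝ => g x) U (nhds (Lam (ℓev x))) := h1.congr' h2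
    have h4 := tendsto_nhds_unique h3 (hUev x)
    rw [← hℓev x b, hbl (ℓev x)]
    exact h4
  have hfeq : inv b = f := funext hfx
  have hfM : f ∈ M := hfeq ▸ hinv1 b
  have hTf : W.T f = b := by rw [← hfeq]; exact hinv2 b
  -- T f lies in the closure of the convex set T '' S
  have hSconv : Convex ℝ (W.T '' S) := by
    rintro _ ⟨g, hg, rfl⟩ _ ⟨g', hg', rfl⟩ a a' ha ha' haa
    refine ⟨a • g + a' • g', E_convex_le hconv ha ha' haa hg hg', ?_⟩
    rw [W.map_add _ (smul_mem_cone hsym a (hmemS g hg)) _ (smul_mem_cone hsym a' (hmemS g' hg')),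
      W.map_smul a _ (hmemS g hg), W.map_smul a' _ (hmemS g' hg')]
  have hclos : W.T f ∈ closure (W.T '' S) := by
    by_contra hnot
    obtain ⟨ℓ, u, hu1, hu2⟩ :=
      geometric_hahn_banach_point_closed hSconv.closure isClosed_closure hnot
    have h1 : ∀ᶠ g : X → ℝ in U, u ≤ ℓ (W.T g) := by
      filter_upwards [hUS] with g hg
      exact (hu2 _ (subset_closure ⟨g, hg, rfl⟩)).le
    have h2 : u ≤ Lam ℓ := ge_of_tendsto (hLam1 ℓ) h1
    have h3 : Lam ℓ = ℓ (W.T f) := by rw [hTf]; exact (hbl ℓ).symm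
    rw [h3] at h2
    linarith
  -- approximate f in Luxemburg norm by elements of S
  obtain ⟨q, hq, hqt⟩ := mem_closure_iff_seq_limit.1 hclos
  have hv : ∀ k, ∃ g, g ∈ S ∧ W.T g = q k := by
    intro k; obtain ⟨g, hg, hgq⟩ := hq k; exact ⟨g, hg, hgq⟩
  choose gs hgs1 hgs2 using hv
  have hluxconv : Filter.Tendsto (fun k => luxemburg E (gs k - f)) Filter.atTop (nhds 0) := by
    have h1 : ∀ k, luxemburg E (gs k - f) = ENNReal.ofReal ‖q k - W.T f‖ := by
      intro k; rw [← hiso' _ (hmemS _ (hgs1 k)) _ hfM, hgs2]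
    rw [funext h1]
    have h2 : Filter.Tendsto (fun k => ‖q k - W.T f‖) Filter.atTop (nhds 0) :=
      tendsto_iff_norm_sub_tendsto_zero.1 hqt
    have h3 := (ENNReal.continuous_ofReal.tendsto 0).comp h2
    simpa [Function.comp_def] using h3
  -- the left-continuity estimate
  have hEθ : ∀ θ : ℝ, 0 < θ → θ < 1 → E (θ • f) ≤ c := by
    intro θ hθ0 hθ1
    apply ENNReal.le_of_forall_pos_le_add
    intro ε hε _
    set t := θ / (1 - θ) with ht
    have htpos : 0 < t := div_pos hθ0 (by linarith)
    set μ := min 1 (ε : ℝ) with hμ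
    have hμ0 : 0 < μ := lt_min one_pos (by exact_mod_cast hε)
    have hμ1 : μ ≤ 1 := min_le_left _ _
    have hev : ∀ᶠ k in Filter.atTop, luxemburg E (gs k - f) < ENNReal.ofReal (μ / t) :=
      hluxconv.eventually_lt_const (ENNReal.ofReal_pos.2 (by positivity))
    obtain ⟨k, hk⟩ := hev.exists
    have hsmall : E (t • (f - gs k)) ≤ ENNReal.ofReal μ := by
      have hlx : luxemburg E (f - gs k) < ENNReal.ofReal (μ / t) := by
        rw [show f - gs k = -(gs k - f) from (neg_sub _ _).symm, lux_neg hsym]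
        exact hk
      exact E_smul_of_lux_lt hconv h0 htpos hμ0 hμ1 hlx
    have hdecomp : θ • f = θ • gs k + (1 - θ) • (t • (f - gs k)) := by
      rw [smul_smul]
      have h5 : (1 - θ) * t = θ := by
        rw [ht, mul_comm, div_mul_eq_mul_div, mul_div_assoc,
          div_self (show (1:ℝ) - θ ≠ 0 by linarith), mul_one]
      rw [h5, smul_sub]
      abel
    calc E (θ • f) = E (θ • gs k + (1 - θ) • (t • (f - gs k))) := by rw [hdecomp]
      _ ≤ ENNReal.ofReal θ * E (gs k) + ENNReal.ofReal (1 - θ) * E (t • (f - gs k)) :=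
          hconv _ _ _ _ hθ0.le (by linarith) (by ring)
      _ ≤ 1 * c + 1 * ENNReal.ofReal μ :=
          add_le_add (mul_le_mul' (ENNReal.ofReal_le_one.2 hθ1.le) (hgs1 k))
            (mul_le_mul' (ENNReal.ofReal_le_one.2 (by linarith)) hsmall)
      _ = c + ENNReal.ofReal μ := by rw [one_mul, one_mul]
      _ ≤ c + ε := by
          gcongr
          calc ENNReal.ofReal μ ≤ ENNReal.ofReal (ε : ℝ) :=
                ENNReal.ofReal_le_ofReal (min_le_right _ _)
            _ = (ε : ℝ≥0∞) := ENNReal.ofReal_coe_nnreal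
  have hfinal : E f ≤ c := by
    apply le_of_tendsto (hlc f)
    have h1 : ∀ᶠ θ : ℝ in nhdsWithin 1 (Set.Iio 1), 0 < θ :=
      eventually_nhdsWithin_of_eventually_nhds (eventually_gt_nhds one_pos)
    have h2 : ∀ᶠ θ : ℝ in nhdsWithin 1 (Set.Iio 1), θ < 1 := eventually_mem_nhdsWithin
    filter_upwards [h1, h2] with θ h1' h2'
    exact hEθ θ h1' h2'
  exact absurd hfinal (not_le.2 hc)

end L6

theorem eRes_ne_top {X : Type*} {E : (X → ℝ) → ℝ≥0∞} (hsym : ∀ f : X → ℝ, E (-f) = E f)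
    {x y : X} (hx : eResInf E x ≠ ⊤) (hy : eResInf E y ≠ ⊤) : eRes E x y ≠ ⊤ := by
  have h1 : eRes E x y ≤ eResInf E x + eResInf E y := by
    apply iSup₂_le
    intro f hf
    calc ENNReal.ofReal (f x - f y) ≤ ENNReal.ofReal (f x) + ENNReal.ofReal (-(f y)) := by
          rw [sub_eq_add_neg]; exact ENNReal.ofReal_add_le
      _ ≤ eResInf E x + eResInf E y := by
          refine add_le_add (le_iSup₂_of_le f hf le_rfl)
            (le_iSup₂_of_le (-f) (by rw [hsym]; exact hf) ?_)
          simp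
  exact ne_top_of_le_ne_top (ENNReal.add_ne_top.2 ⟨hx, hy⟩) h1


/-- **Characterization of lower semicontinuity, trivial kernel case** (Theorem 3.10). -/
theorem lsc_characterization_trivial_kernel {X : Type*} [Nonempty X]
    (E : (X → ℝ) → ℝ≥0∞)
    (hconv : ConvexENNReal E) (h0 : E 0 = 0) (hsym : ∀ f : X → ℝ, E (-f) = E f)
    (hrefl : ReflexiveForm E) :
    (LowerSemicontinuous E ∧ (∀ f ∈ modularCone E, luxemburg E f = 0 → f = 0) ∧
      (∀ x y : X, eRes E x y ≠ ⊤)) ↔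
    (LeftContinuousFunctional E ∧
      ((∀ f ∈ modularCone E, luxemburg E f = 0 → f = 0) ∧
        ∀ f : ℕ → X → ℝ, (∀ n, f n ∈ modularCone E) →
          (∀ ε : ℝ≥0∞, 0 < ε → ∃ N : ℕ, ∀ m ≥ N, ∀ n ≥ N, luxemburg E (f m - f n) < ε) →
          ∃ g ∈ modularCone E,
            Filter.Tendsto (fun n => luxemburg E (f n - g)) Filter.atTop (nhds 0)) ∧
      (∀ x : X, eResInf E x ≠ ⊤)) := by
  obtain ⟨W⟩ := hrefl
  constructor
  · rintro ⟨hlsc, hker, hres⟩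
    have hRinf : ∀ x : X, eResInf E x ≠ ⊤ :=
      fun x => eResInf_ne_top_forward hconv h0 hlsc hker hres x
    exact ⟨leftCont_of_lsc hconv h0 hlsc, ⟨hker,
      fun f hmem hC => complete_of_lsc hconv h0 hsym hlsc hRinf f hmem hC⟩, hRinf⟩
  · rintro ⟨hlc, ⟨hker, hcomp⟩, hRinf⟩
    exact ⟨lsc_backward hconv h0 hsym W hlc hker hcomp hRinf, hker,
      fun x y => eRes_ne_top hsym (hRinf x) (hRinf y)⟩
end
end
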